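/- The ℤ^{n+1}-graded component Der(ℂ_q)_a of the derivation algebra of the quantum torus equals ℂ · ad t^a if a ∉ rad f, and equals ⊕_{i=0}^n ℂ t^a ∂_i if a ∈ rad f, where ∂_i is the degree derivation ∂_i(t^b) = b_i t^b and ad t^a is the inner derivation x ↦ t^a x − x t^a. -/

import Mathlib

/-- `σ(a,b) = ∏_{0 ≤ i ≤ j ≤ n} q_{ji}^{a_j b_i}`. -/
noncomputable def sig {n : ℕ} (q : Fin (n+1) → Fin (n+1) → ℂˣ)
    (a b : Fin (n+1) → ℤ) : ℂˣ :=
  ∏ i : Fin (n+1), ∏ j : Fin (n+1), if i ≤ j then q j i ^ (a j * b i) else 1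

/-- `f(a,b) = σ(a,b) σ(b,a)⁻¹`. -/
noncomputable def ff {n : ℕ} (q : Fin (n+1) → Fin (n+1) → ℂˣ)
    (a b : Fin (n+1) → ℤ) : ℂˣ :=
  sig q a b * (sig q b a)⁻¹
/-- The inner derivation `ad x : y ↦ xy - yx` as a ℂ-linear map. -/
noncomputable def adL {C : Type*} [Ring C] [Algebra ℂ C] (x : C) :
    C →ₗ[ℂ] C :=
  LinearMap.mulLeft ℂ x - LinearMap.mulRight ℂ x

/-! A linear map of degree `a` acts as `t^b ↦ g(b) t^{a+b}`, and it is a derivation iff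
`g(b+c) = σ(a,c) g(b) + σ(b,a) g(c)`. If `a ∈ rad f` then `σ(a,·) = σ(·,a)` is a character, so
the equation says that `g / σ(a,·)` is additive on `ℤ^{n+1}`, i.e. `g(b) = (∑ uᵢ bᵢ) σ(a,b)`.
Otherwise, subtracting the equation with `b, c` swapped gives
`(σ(a,c) - σ(c,a)) g(b) = (σ(a,b) - σ(b,a)) g(c)`; a `c` with `σ(a,c) ≠ σ(c,a)` then makes `g`
proportional to `b ↦ σ(a,b) - σ(b,a)`, the coefficient function of `ad t^a`. -/

theorem LinearMap.leibniz_of_span_eq_top {R C ι : Type*} [CommSemiring R] [Semiring C]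
    [Algebra R C] {T : ι → C} (hT : Submodule.span R (Set.range T) = ⊤) {D : C →ₗ[R] C}
    (hD : ∀ b c, D (T b * T c) = D (T b) * T c + T b * D (T c)) (x y : C) :
    D (x * y) = D x * y + x * D y := by
  have key : (LinearMap.mul R C).compr₂ D
      = (LinearMap.mul R C).comp D + (LinearMap.mul R C).compl₂ D :=
    LinearMap.ext_on_range hT fun b => LinearMap.ext_on_range hT fun c => by simpa using hD b c
  simpa using LinearMap.congr_fun (LinearMap.congr_fun key x) y

theorem exists_eq_sum_mul_of_map_add {ι R : Type*} [Fintype ι] [DecidableEq ι] [CommRing R]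
    {h : (ι → ℤ) → R} (hadd : ∀ b c, h (b + c) = h b + h c) :
    ∃ u : ι → R, h = fun b => ∑ i, u i * b i := by
  refine ⟨fun i => h fun j => if i = j then 1 else 0, funext fun b => ?_⟩
  simpa [zsmul_eq_mul, mul_comm] using
    (AddMonoidHom.mk' h hadd).toIntLinearMap.pi_apply_eq_sum_univ b

theorem exists_coeff_iff_exists_eq {R M G ι : Type*} [CommSemiring R] [AddCommMonoid M]
    [Module R M] [Add G] {T : G → M} (hTspan : Submodule.span R (Set.range T) = ⊤) {a : G}
    {D : M →ₗ[R] M} {F : ι → G → R} {L : ι → M →ₗ[R] M}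
    (hL : ∀ u b, L u (T b) = F u b • T (a + b)) :
    (∃ g, (∀ b, D (T b) = g b • T (a + b)) ∧ ∃ u, g = F u) ↔ ∃ u, D = L u := by
  constructor
  · rintro ⟨_, hg, u, rfl⟩
    exact ⟨u, LinearMap.ext_on_range hTspan fun b => by rw [hg, hL]⟩
  · rintro ⟨u, rfl⟩
    exact ⟨F u, hL u, u, rfl⟩

section QuantumTorus

variable {n : ℕ} {q : Fin (n+1) → Fin (n+1) → ℂˣ}

theorem sig_add_left (a b c : Fin (n+1) → ℤ) :
    (sig q (a + b) c : ℂ) = sig q a c * sig q b c := by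
  rw [← Units.val_mul]
  simp only [sig, ← Finset.prod_mul_distrib]
  congr! 3 with i _ j _
  split_ifs <;> simp [add_mul, zpow_add]

theorem sig_add_right (a b c : Fin (n+1) → ℤ) :
    (sig q a (b + c) : ℂ) = sig q a b * sig q a c := by
  rw [← Units.val_mul]
  simp only [sig, ← Finset.prod_mul_distrib]
  congr! 3 with i _ j _
  split_ifs <;> simp [mul_add, zpow_add]

theorem ff_eq_one_iff {a b : Fin (n+1) → ℤ} : ff q a b = 1 ↔ (sig q a b : ℂ) = sig q b a := by
  rw [ff, mul_inv_eq_one, Units.ext_iff]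

variable (q) in
/-- `g` is the coefficient function `D(t^b) = g(b) t^{a+b}` of a derivation `D` of degree `a`. -/
def IsDerivationCoeff (a : Fin (n+1) → ℤ) (g : (Fin (n+1) → ℤ) → ℂ) : Prop :=
  ∀ b c, g (b + c) = sig q a c * g b + sig q b a * g c

theorem isDerivationCoeff_iff_of_forall_ff_eq_one {a : Fin (n+1) → ℤ} (ha : ∀ b, ff q a b = 1)
    {g : (Fin (n+1) → ℤ) → ℂ} :
    IsDerivationCoeff q a g ↔ ∃ u : Fin (n+1) → ℂ, g = fun b => (∑ i, u i * b i) * sig q a b := by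
  have hsym b : (sig q b a : ℂ) = sig q a b := (ff_eq_one_iff.1 (ha b)).symm
  constructor
  · intro hg
    have hadd b c : g (b + c) / sig q a (b + c) = g b / sig q a b + g c / sig q a c := by
      rw [hg, hsym, sig_add_right]
      field_simp
    obtain ⟨u, hu⟩ := exists_eq_sum_mul_of_map_add (h := fun b => g b / sig q a b) hadd
    refine ⟨u, funext fun b => ?_⟩
    rw [← congrFun hu b, div_mul_cancel₀ _ (Units.ne_zero _)]
  · rintro ⟨u, rfl⟩ b c
    simp only [hsym, sig_add_right, Pi.add_apply, Int.cast_add, mul_add, Finset.sum_add_distrib]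
    ring

theorem isDerivationCoeff_iff_of_not_forall_ff_eq_one {a : Fin (n+1) → ℤ}
    (ha : ¬ ∀ b, ff q a b = 1) {g : (Fin (n+1) → ℤ) → ℂ} :
    IsDerivationCoeff q a g ↔ ∃ c : ℂ, g = fun b => c * (sig q a b - sig q b a) := by
  constructor
  · intro hg
    obtain ⟨b₀, hb₀⟩ := not_forall.1 ha
    have hd : (sig q a b₀ : ℂ) - sig q b₀ a ≠ 0 := sub_ne_zero.2 (mt ff_eq_one_iff.2 hb₀)
    have hswap b c : (sig q a c - sig q c a : ℂ) * g b = (sig q a b - sig q b a) * g c := by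
      have hcb := hg c b
      rw [add_comm c b] at hcb
      linear_combination hcb - hg b c
    refine ⟨g b₀ / (sig q a b₀ - sig q b₀ a), funext fun b => ?_⟩
    field_simp
    linear_combination hswap b b₀
  · rintro ⟨c, rfl⟩ b d
    simp only [sig_add_left, sig_add_right]
    ring

variable {C : Type*} [Ring C] [Algebra ℂ C] {T : (Fin (n+1) → ℤ) → C}

theorem adL_T_apply (hT : ∀ a b, T a * T b = (sig q a b : ℂ) • T (a + b)) (a b : Fin (n+1) → ℤ) :
    adL (T a) (T b) = ((sig q a b : ℂ) - sig q b a) • T (a + b) := by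
  rw [adL, LinearMap.sub_apply, LinearMap.mulLeft_apply, LinearMap.mulRight_apply, hT, hT,
    add_comm b, sub_smul]

theorem leibniz_T_mul_T_iff (hT : ∀ a b, T a * T b = (sig q a b : ℂ) • T (a + b))
    (hT₀ : ∀ b, T b ≠ 0) {a : Fin (n+1) → ℤ} {D : C →ₗ[ℂ] C} {g : (Fin (n+1) → ℤ) → ℂ}
    (hg : ∀ b, D (T b) = g b • T (a + b)) (b c : Fin (n+1) → ℤ) :
    D (T b * T c) = D (T b) * T c + T b * D (T c) ↔
      g (b + c) = sig q a c * g b + sig q b a * g c := by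
  have lhs : D (T b * T c) = ((sig q b c : ℂ) * g (b + c)) • T (a + b + c) := by
    rw [hT, map_smul, hg, smul_smul, add_assoc]
  have rhs : D (T b) * T c + T b * D (T c)
      = ((sig q b c : ℂ) * (sig q a c * g b + sig q b a * g c)) • T (a + b + c) := by
    rw [hg, hg, smul_mul_assoc, mul_smul_comm, hT, hT, smul_smul, smul_smul,
      show b + (a + c) = a + b + c by abel, ← add_smul, sig_add_left, sig_add_right]
    congr 1
    ring
  rw [lhs, rhs, (smul_left_injective ℂ (hT₀ _)).eq_iff, mul_right_inj' (Units.ne_zero _)]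

theorem leibniz_iff_isDerivationCoeff (hT : ∀ a b, T a * T b = (sig q a b : ℂ) • T (a + b))
    (hTind : LinearIndependent ℂ T) (hTspan : Submodule.span ℂ (Set.range T) = ⊤)
    {a : Fin (n+1) → ℤ} {D : C →ₗ[ℂ] C} {g : (Fin (n+1) → ℤ) → ℂ}
    (hg : ∀ b, D (T b) = g b • T (a + b)) :
    (∀ x y : C, D (x * y) = D x * y + x * D y) ↔ IsDerivationCoeff q a g :=
  ⟨fun hD b c => (leibniz_T_mul_T_iff hT hTind.ne_zero hg b c).1 (hD _ _),
    fun hgD => LinearMap.leibniz_of_span_eq_top hTspan fun b c =>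
      (leibniz_T_mul_T_iff hT hTind.ne_zero hg b c).2 (hgD b c)⟩

theorem homogeneous_derivation_iff (hT : ∀ a b, T a * T b = (sig q a b : ℂ) • T (a + b))
    (hTind : LinearIndependent ℂ T) (hTspan : Submodule.span ℂ (Set.range T) = ⊤)
    {a : Fin (n+1) → ℤ} {D : C →ₗ[ℂ] C} :
    ((∀ x y : C, D (x * y) = D x * y + x * D y) ∧
        ∀ b, D (T b) ∈ Submodule.span ℂ {T (a + b)}) ↔
      ∃ g, (∀ b, D (T b) = g b • T (a + b)) ∧ IsDerivationCoeff q a g := by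
  constructor
  · rintro ⟨hD, hspan⟩
    choose g hg using fun b => Submodule.mem_span_singleton.1 (hspan b)
    have hg' b : D (T b) = g b • T (a + b) := (hg b).symm
    exact ⟨g, hg', (leibniz_iff_isDerivationCoeff hT hTind hTspan hg').1 hD⟩
  · rintro ⟨g, hg, hgD⟩
    exact ⟨(leibniz_iff_isDerivationCoeff hT hTind hTspan hg).2 hgD,
      fun b => Submodule.mem_span_singleton.2 ⟨g b, (hg b).symm⟩⟩

end QuantumTorus

theorem stmt14_general {n : ℕ} (q : Fin (n+1) → Fin (n+1) → ℂˣ)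
    {C : Type*} [Ring C] [Algebra ℂ C]
    (T : (Fin (n+1) → ℤ) → C)
    (hT : ∀ a b, T a * T b = ((sig q a b : ℂ)) • T (a + b))
    (hTind : LinearIndependent ℂ T)
    (hTspan : Submodule.span ℂ (Set.range T) = ⊤)
    -- `P a i` is the linear map `t^a ∂ᵢ : t^b ↦ bᵢ σ(a,b) t^{a+b}`
    (P : (Fin (n+1) → ℤ) → Fin (n+1) → (C →ₗ[ℂ] C))
    (hP : ∀ a i b, P a i (T b) = ((b i : ℂ) * ((sig q a b : ℂ))) • T (a + b))
    (a : Fin (n+1) → ℤ) (D : C →ₗ[ℂ] C) :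
    ((∀ b, ff q a b = 1) →
      (((∀ x y : C, D (x * y) = D x * y + x * D y) ∧
          ∀ b, D (T b) ∈ Submodule.span ℂ {T (a + b)}) ↔
        ∃ u : Fin (n+1) → ℂ, D = ∑ i : Fin (n+1), u i • P a i)) ∧
    ((¬ ∀ b, ff q a b = 1) →
      (((∀ x y : C, D (x * y) = D x * y + x * D y) ∧
          ∀ b, D (T b) ∈ Submodule.span ℂ {T (a + b)}) ↔
        ∃ c : ℂ, D = c • adL (T a))) := by
  have hsum (u : Fin (n+1) → ℂ) b :
      (∑ i, u i • P a i) (T b) = ((∑ i, u i * b i) * sig q a b) • T (a + b) := by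
    simp only [LinearMap.sum_apply, LinearMap.smul_apply, hP, smul_smul, Finset.sum_mul,
      Finset.sum_smul, mul_assoc]
  have hadL (c : ℂ) b :
      (c • adL (T a)) (T b) = (c * (sig q a b - sig q b a)) • T (a + b) := by
    rw [LinearMap.smul_apply, adL_T_apply hT, smul_smul]
  rw [homogeneous_derivation_iff hT hTind hTspan]
  refine ⟨fun ha => ?_, fun ha => ?_⟩
  · simp_rw [isDerivationCoeff_iff_of_forall_ff_eq_one ha]
    exact exists_coeff_iff_exists_eq hTspan hsum
  · simp_rw [isDerivationCoeff_iff_of_not_forall_ff_eq_one ha]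
    exact exists_coeff_iff_exists_eq hTspan hadL

theorem stmt14 {n : ℕ} (q : Fin (n+1) → Fin (n+1) → ℂˣ)
    (hq1 : ∀ i, q i i = 1) (hq2 : ∀ i j, q i j = (q j i)⁻¹)
    (hroot : ∀ i j, ∃ m : ℕ, 0 < m ∧ q i j ^ m = 1)
    {C : Type*} [Ring C] [Algebra ℂ C]
    (T : (Fin (n+1) → ℤ) → C)
    (hT : ∀ a b, T a * T b = ((sig q a b : ℂ)) • T (a + b))
    (hT0 : T 0 = 1)
    (hTind : LinearIndependent ℂ T)
    (hTspan : Submodule.span ℂ (Set.range T) = ⊤)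
    -- `P a i` is the linear map `t^a ∂ᵢ : t^b ↦ bᵢ σ(a,b) t^{a+b}`
    (P : (Fin (n+1) → ℤ) → Fin (n+1) → (C →ₗ[ℂ] C))
    (hP : ∀ a i b, P a i (T b) = ((b i : ℂ) * ((sig q a b : ℂ))) • T (a + b))
    (a : Fin (n+1) → ℤ) (D : C →ₗ[ℂ] C) :
    ((∀ b, ff q a b = 1) →
      (((∀ x y : C, D (x * y) = D x * y + x * D y) ∧
          ∀ b, D (T b) ∈ Submodule.span ℂ {T (a + b)}) ↔
        ∃ u : Fin (n+1) → ℂ, D = ∑ i : Fin (n+1), u i • P a i)) ∧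
    ((¬ ∀ b, ff q a b = 1) →
      (((∀ x y : C, D (x * y) = D x * y + x * D y) ∧
          ∀ b, D (T b) ∈ Submodule.span ℂ {T (a + b)}) ↔
        ∃ c : ℂ, D = c • adL (T a))) :=
  stmt14_general q T hT hTind hTspan P hP a D
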